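/- arXiv:2002.04692 — 3 statements merged into one kernel-verified Lean document; each statement's English description precedes it below -/
import Mathlib

section
/- Let H_w be a class of functions w : Z → ℝ^k that is closed under finite sums and scalar multiplication (i.e., forms a vector space under pointwise operations). Fix a finite set E of environments, each with a risk functional R^e defined on predictors. A tuple (Φ, (w^q)_{q∈E}) is a Nash equilibrium of the ensemble game if for every e ∈ E and every w̄ ∈ H_w, R^e((1/|E|)(w^e + Σ_{q≠e} w^q) ∘ Φ) ≤ R^e((1/|E|)(w̄ + Σ_{q≠e} w^q) ∘ Φ). A pair (Φ, w) with w ∈ H_w is an invariant predictor if for every e ∈ E and every w̄ ∈ H_w, R^e(w ∘ Φ) ≤ R^e(w̄ ∘ Φ). Then: (Φ, (w^q)_{q∈E}) is a Nash equilibrium of the ensemble game if and only if (Φ, w^av) with w^av = (1/|E|) Σ_{q∈E} w^q is an invariant predictor. -/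
/-!
Since `H_w` is a vector space containing every `w^q`, the deviation `w̄ ↦ (w̄ + Σ_{q ≠ e} w^q) / |E|`
available to environment `e` is an affine bijection of `H_w` onto itself. Hence environment `e`'s
best-response condition ranges over exactly the predictors `v ∘ Φ` with `v ∈ H_w`, while its current
predictor is the ensemble average `w^av ∘ Φ`.
-/

open Finset

def Submodule.ofClosed {K M : Type*} [Semiring K] [AddCommGroup M] [Module K M] (S : Set M)
    (hS : S.Nonempty) (hadd : ∀ x ∈ S, ∀ y ∈ S, x + y ∈ S) (hsmul : ∀ (c : K), ∀ x ∈ S, c • x ∈ S) :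
    Submodule K M where
  carrier := S
  add_mem' hx hy := hadd _ hx _ hy
  zero_mem' := by
    obtain ⟨x, hx⟩ := hS
    simpa using hsmul 0 x hx
  smul_mem' c _ := hsmul c _

theorem Submodule.image_smul_add_eq {K M : Type*} [DivisionRing K] [AddCommGroup M] [Module K M]
    (p : Submodule K M) {c : K} (hc : c ≠ 0) {s : M} (hs : s ∈ p) :
    (fun v => c • (v + s)) '' p = p := by
  ext x
  constructor
  · rintro ⟨v, hv, rfl⟩
    exact p.smul_mem c (p.add_mem hv hs)
  · intro hx
    refine ⟨c⁻¹ • x - s, p.sub_mem (p.smul_mem _ hx) hs, ?_⟩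
    simp [smul_smul, hc]

theorem Submodule.forall_mem_smul_add_iff {K M : Type*} [DivisionRing K] [AddCommGroup M]
    [Module K M] (p : Submodule K M) {c : K} (hc : c ≠ 0) {s : M} (hs : s ∈ p) (P : M → Prop) :
    (∀ v ∈ p, P (c • (v + s))) ↔ ∀ v ∈ p, P v := by
  have h := Set.forall_mem_image (f := fun v => c • (v + s)) (s := (p : Set M)) (p := P)
  rw [p.image_smul_add_eq hc hs] at h
  exact h.symm

/-- NE of the ensemble game ↔ invariant predictor (Theorem 1 / Corollary 1 core). -/
theorem ne_iff_invariant
    {X Z E : Type*} [Fintype E] [Nonempty E] [DecidableEq E] {k : ℕ}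
    (Hw : Set (Z → (Fin k → ℝ)))
    (hadd : ∀ w1 ∈ Hw, ∀ w2 ∈ Hw, w1 + w2 ∈ Hw)
    (hsmul : ∀ (c : ℝ), ∀ w ∈ Hw, c • w ∈ Hw)
    (R : E → (X → (Fin k → ℝ)) → ℝ)
    (Φ : X → Z)
    (w : E → (Z → (Fin k → ℝ)))
    (hw : ∀ e, w e ∈ Hw) :
    (∀ e : E, ∀ wb ∈ Hw,
        R e (fun x => ((Fintype.card E : ℝ)⁻¹) •
          (w e (Φ x) + ∑ q ∈ Finset.univ.erase e, w q (Φ x)))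
        ≤ R e (fun x => ((Fintype.card E : ℝ)⁻¹) •
          (wb (Φ x) + ∑ q ∈ Finset.univ.erase e, w q (Φ x))))
    ↔
    (∀ e : E, ∀ wb ∈ Hw,
        R e (fun x => ((Fintype.card E : ℝ)⁻¹) • (∑ q : E, w q (Φ x)))
        ≤ R e (fun x => wb (Φ x))) := by
  let W := Submodule.ofClosed Hw ⟨_, hw (Classical.arbitrary E)⟩ hadd hsmul
  have hn : (Fintype.card E : ℝ)⁻¹ ≠ 0 := by simp
  refine forall_congr' fun e => ?_
  let S := ∑ q ∈ univ.erase e, w q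
  have hS : S ∈ W := W.sum_mem fun q _ => hw q
  have hcurrent : (fun x => (Fintype.card E : ℝ)⁻¹ • (w e (Φ x) + ∑ q ∈ univ.erase e, w q (Φ x)))
      = fun x => (Fintype.card E : ℝ)⁻¹ • ∑ q, w q (Φ x) := by
    funext x
    rw [add_sum_erase univ (fun q => w q (Φ x)) (mem_univ e)]
  have hdeviation : ∀ wb : Z → Fin k → ℝ,
      (fun x => (Fintype.card E : ℝ)⁻¹ • (wb (Φ x) + ∑ q ∈ univ.erase e, w q (Φ x)))
        = ((Fintype.card E : ℝ)⁻¹ • (wb + S)) ∘ Φ := by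
    intro wb
    funext x
    simp [S, Finset.sum_apply]
  rw [hcurrent]
  simp only [hdeviation]
  exact W.forall_mem_smul_add_iff hn hS
    fun v => R e (fun x => (Fintype.card E : ℝ)⁻¹ • ∑ q, w q (Φ x)) ≤ R e (v ∘ Φ)
end

section
/- With the same setup as the NE–invariance equivalence (H_w a vector space of classifiers, finite environment set E, risks R^e, fixed representation Φ): if (Φ, w) is an invariant predictor (w minimizes R^e(· ∘ Φ) over H_w simultaneously for all e ∈ E), then for every decomposition w = (1/|E|) Σ_{q∈E} w^q with each w^q ∈ H_w, the tuple (Φ, (w^q)) is a Nash equilibrium of the ensemble game. -/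
/-- If (Φ, w) is an invariant predictor, then every decomposition
w = (1/|E|) ∑ w^q with each w^q ∈ H_w gives a Nash equilibrium of the ensemble game. -/
theorem invariant_decomposition_is_ne
    {X Z E : Type*} [Fintype E] [Nonempty E] [DecidableEq E] {k : ℕ}
    (Hw : Set (Z → (Fin k → ℝ)))
    (hadd : ∀ w1 ∈ Hw, ∀ w2 ∈ Hw, w1 + w2 ∈ Hw)
    (hsmul : ∀ (c : ℝ), ∀ w ∈ Hw, c • w ∈ Hw)
    (R : E → (X → (Fin k → ℝ)) → ℝ)
    (Φ : X → Z)
    (w : Z → (Fin k → ℝ)) (hwHw : w ∈ Hw)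
    (hinv : ∀ e : E, ∀ wb ∈ Hw, R e (fun x => w (Φ x)) ≤ R e (fun x => wb (Φ x)))
    (wq : E → (Z → (Fin k → ℝ)))
    (hwq : ∀ e, wq e ∈ Hw)
    (hdecomp : w = ((Fintype.card E : ℝ)⁻¹) • ∑ q : E, wq q) :
    ∀ e : E, ∀ wb ∈ Hw,
      R e (fun x => ((Fintype.card E : ℝ)⁻¹) •
        (wq e (Φ x) + ∑ q ∈ Finset.univ.erase e, wq q (Φ x)))
      ≤ R e (fun x => ((Fintype.card E : ℝ)⁻¹) •
        (wb (Φ x) + ∑ q ∈ Finset.univ.erase e, wq q (Φ x))) := by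
  intro e wb hwb
  set s : Z → (Fin k → ℝ) := ∑ q ∈ Finset.univ.erase e, wq q with hs
  have hsHw : s ∈ Hw := by
    rw [hs]
    classical
    refine Finset.sum_induction _ (· ∈ Hw) (fun a b ha hb => hadd a ha b hb) ?_ ?_
    · have := hsmul 0 w hwHw
      simpa using this
    · intro q _; exact hwq q
  have hu : ((Fintype.card E : ℝ)⁻¹) • (wb + s) ∈ Hw :=
    hsmul _ _ (hadd wb hwb s hsHw)
  have key := hinv e _ hu
  have h1 : (fun x => w (Φ x)) =
      (fun x => ((Fintype.card E : ℝ)⁻¹) • (wq e (Φ x) + ∑ q ∈ Finset.univ.erase e, wq q (Φ x))) := by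
    funext x
    have : (∑ q : E, wq q) (Φ x) = wq e (Φ x) + ∑ q ∈ Finset.univ.erase e, wq q (Φ x) := by
      rw [Finset.sum_apply]
      rw [← Finset.add_sum_erase _ _ (Finset.mem_univ e)]
    rw [hdecomp]
    simp only [Pi.smul_apply, this]
  have h2 : (fun x => (((Fintype.card E : ℝ)⁻¹) • (wb + s)) (Φ x)) =
      (fun x => ((Fintype.card E : ℝ)⁻¹) • (wb (Φ x) + ∑ q ∈ Finset.univ.erase e, wq q (Φ x))) := by
    funext x
    simp [hs, Finset.sum_apply]
  rw [h1, h2] at key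
  exact key
end

section
/- With the same setup: if (Φ, (w^q)_{q∈E}) is a Nash equilibrium of the ensemble game, then the ensemble w^av = (1/|E|) Σ_q w^q satisfies R^e(w^av ∘ Φ) ≤ R^e(w' ∘ Φ) for all w' ∈ H_w and all e ∈ E. (Proof hint: given any deviation target w', the environment e can play w̃^e = |E|·w' − Σ_{q≠e} w^q ∈ H_w, whose induced ensemble equals w'.) -/
theorem Submodule.exists_mem_inv_smul_add_eq {K M : Type*} [DivisionRing K] [AddCommGroup M]
    [Module K M] (S : Submodule K M) {n : K} (hn : n ≠ 0) {s v : M} (hs : s ∈ S)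
    (hv : v ∈ S) : ∃ u ∈ S, n⁻¹ • (u + s) = v :=
  ⟨n • v - s, S.sub_mem (S.smul_mem n hv) hs, by rw [sub_add_cancel, inv_smul_smul₀ hn]⟩

/-- If (Φ, (w^q)) is a Nash equilibrium of the ensemble game, the ensemble
w^av = (1/|E|) ∑ w^q is an invariant predictor. -/
theorem ne_ensemble_is_invariant
    {X Z E : Type*} [Fintype E] [Nonempty E] [DecidableEq E] {k : ℕ}
    (Hw : Set (Z → (Fin k → ℝ)))
    (hadd : ∀ w1 ∈ Hw, ∀ w2 ∈ Hw, w1 + w2 ∈ Hw)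
    (hsmul : ∀ (c : ℝ), ∀ w ∈ Hw, c • w ∈ Hw)
    (R : E → (X → (Fin k → ℝ)) → ℝ)
    (Φ : X → Z)
    (w : E → (Z → (Fin k → ℝ)))
    (hw : ∀ e, w e ∈ Hw)
    (hne : ∀ e : E, ∀ wb ∈ Hw,
      R e (fun x => ((Fintype.card E : ℝ)⁻¹) •
        (w e (Φ x) + ∑ q ∈ Finset.univ.erase e, w q (Φ x)))
      ≤ R e (fun x => ((Fintype.card E : ℝ)⁻¹) •
        (wb (Φ x) + ∑ q ∈ Finset.univ.erase e, w q (Φ x)))) :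
    ∀ e : E, ∀ w' ∈ Hw,
      R e (fun x => ((Fintype.card E : ℝ)⁻¹) • (∑ q : E, w q (Φ x)))
      ≤ R e (fun x => w' (Φ x)) := by
  intro e w' hw'
  let S : Submodule ℝ (Z → Fin k → ℝ) := .ofLinearComb Hw ⟨w e, hw e⟩
    fun u hu v hv a b => hadd _ (hsmul a u hu) _ (hsmul b v hv)
  have hcard : (Fintype.card E : ℝ) ≠ 0 := by exact_mod_cast Fintype.card_ne_zero
  obtain ⟨u, hu, hu_avg⟩ := S.exists_mem_inv_smul_add_eq hcard
    (S.sum_mem fun q _ => hw q : ∑ q ∈ Finset.univ.erase e, w q ∈ S) hw'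
  convert hne e u hu using 2
  · ext x : 1
    rw [Finset.add_sum_erase _ (fun q => w q (Φ x)) (Finset.mem_univ e)]
  · ext x : 1
    simpa only [Pi.smul_apply, Pi.add_apply, Finset.sum_apply] using
      (congrFun hu_avg (Φ x)).symm
end
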